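/- arXiv:0812.1194 — 4 statements merged into one kernel-verified Lean document; each statement's English description precedes it below -/
import Mathlib

section
/- Let x_1,...,x_n ∈ Z_2 and define S_t = Σ_{i=1}^n C(n−i+t−1, t−1)·x_i (mod 2) for t ≥ 1. If x is not the zero vector, then S_t is not identically zero: there exists t ≥ 1 with S_t = 1. -/
/-!
Let `j` be the last node with `x j = 1` and `k = n - 1 - j`. Choose `N` with `n < 2 ^ N` and
`t - 1 = 2 ^ N - 1 - k`. Modulo `2`, `C(2 ^ N - 1, s) = 1` for `s < 2 ^ N`, while
`C(2 ^ N + r, s) = C(r, s)` by `(1 + X) ^ 2 ^ N = 1 + X ^ 2 ^ N`. So the coefficient of `x j`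
in `S_t` is `1`, and the coefficients of the earlier nodes are `C(r, t - 1)` with `r < t - 1`,
that is `0`.
-/

open Finset Polynomial

section PrimePowerBinomials

variable {p : ℕ} [Fact p.Prime]

theorem cast_choose_prime_pow_add (N r : ℕ) {s : ℕ} (hs : s < p ^ N) :
    ((p ^ N + r).choose s : ZMod p) = r.choose s := by
  have hfrob : ((X : (ZMod p)[X]) + 1) ^ p ^ N = X ^ p ^ N + 1 := by
    rw [add_pow_char_pow, one_pow]
  rw [← coeff_X_add_one_pow, ← coeff_X_add_one_pow, pow_add, hfrob, add_mul, one_mul,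
    coeff_add, coeff_X_pow_mul', if_neg (by omega), zero_add]

theorem cast_choose_prime_pow_sub_one {N s : ℕ} (hs : s < p ^ N) :
    ((p ^ N - 1).choose s : ZMod p) = (-1) ^ s := by
  induction s with
  | zero => simp
  | succ s ih =>
    have hpN : 0 < p ^ N := by omega
    -- Pascal's rule at the top row `p ^ N`, whose inner entries vanish mod `p`
    have hpascal : ((p ^ N).choose (s + 1) : ZMod p) =
        ((p ^ N - 1).choose s : ZMod p) + (p ^ N - 1).choose (s + 1) := by
      conv_lhs => rw [← Nat.sub_add_cancel hpN]
      push_cast [Nat.choose_succ_succ]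
      rfl
    have hvanish : ((p ^ N).choose (s + 1) : ZMod p) = 0 :=
      (ZMod.natCast_eq_zero_iff _ _).2 (Nat.Prime.dvd_choose_pow Fact.out (by omega) (by omega))
    rw [pow_succ, mul_neg_one, ← ih (by omega), eq_neg_iff_add_eq_zero, add_comm, ← hpascal,
      hvanish]

theorem cast_choose_add_prime_pow_sub_one_sub_eq_zero {N k m : ℕ} (hkm : k < m)
    (hm : m < p ^ N) : ((m + (p ^ N - 1 - k)).choose (p ^ N - 1 - k) : ZMod p) = 0 := by
  rw [show m + (p ^ N - 1 - k) = p ^ N + (m - k - 1) by omega,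
    cast_choose_prime_pow_add N _ (by omega), Nat.choose_eq_zero_of_lt (by omega), Nat.cast_zero]

end PrimePowerBinomials

theorem Fin.exists_ne_zero_and_eq_zero_of_gt {M : Type*} [Zero M] {n : ℕ} {x : Fin n → M}
    (hx : x ≠ 0) : ∃ j, x j ≠ 0 ∧ ∀ i, j < i → x i = 0 := by
  classical
  obtain ⟨i, hi⟩ := Function.ne_iff.mp hx
  obtain ⟨j, hj, hmax⟩ := (univ.filter (x · ≠ 0)).exists_max_image id ⟨i, by simpa using hi⟩
  refine ⟨j, (mem_filter.mp hj).2, fun i hji => ?_⟩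
  by_contra hi
  exact (hmax i (by simpa using hi)).not_gt hji

/-- For a nonzero configuration `x ∈ (Z_2)^n`, the sequence
`S_t = Σ_{i=1}^n C(n-i+t-1, t-1) x_i (mod 2)` is not identically zero:
some `S_t` with `t ≥ 1` equals `1`.  (Here node `i ∈ {1,…,n}` is represented by
`i : Fin n` standing for `i+1`, so `n - i` becomes `n - 1 - i`.) -/
theorem stmt_4 (n : ℕ) (x : Fin n → ZMod 2) (hx : x ≠ 0) :
    ∃ t : ℕ, 1 ≤ t ∧
      (∑ i : Fin n, ((n - 1 - (i : ℕ) + (t - 1)).choose (t - 1) : ZMod 2) * x i) = 1 := by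
  obtain ⟨j, hxj, hlast⟩ := Fin.exists_ne_zero_and_eq_zero_of_gt hx
  obtain ⟨N, hN⟩ : ∃ N, n < 2 ^ N := ⟨n, Nat.lt_two_pow_self⟩
  refine ⟨2 ^ N - (n - 1 - j), by omega, ?_⟩
  rw [show 2 ^ N - (n - 1 - j) - 1 = 2 ^ N - 1 - (n - 1 - j) by omega, sum_eq_single j]
  · have hxj : x j = 1 := by generalize x j = a at hxj; revert a; decide
    rw [show n - 1 - j + (2 ^ N - 1 - (n - 1 - j)) = 2 ^ N - 1 by omega,
      cast_choose_prime_pow_sub_one (by omega), hxj, mul_one, show (-1 : ZMod 2) = 1 from rfl,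
      one_pow]
  · intro i _ hij
    rcases lt_or_gt_of_ne hij with hij | hji
    · rw [cast_choose_add_prime_pow_sub_one_sub_eq_zero (by omega) (by omega), zero_mul]
    · rw [hlast i hji, mul_zero]
  · exact fun h => absurd (mem_univ j) h
end

section
/- Every connected graph G with at least two edges admits a cyclic sequence e_0, e_1, ..., e_k of edges (indices mod k+1) such that every edge of G appears in the sequence, consecutive edges e_i and e_{i+1} share exactly one vertex, and no edge appears more than twice in the sequence. -/
/-!
Double every edge of `G`. A closed walk traversing each edge twice is built by splicing, at a
vertex `x` of the current closed walk, the detour `x → y → x` along an edge `xy` not yet used;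
connectivity guarantees such an edge exists until every edge is covered. Consecutive edges of a
closed walk, read cyclically, share a vertex, and the only way two consecutive ones can be equal
is an immediate backtrack. Deleting these cyclic repetitions keeps every edge, does not increase
multiplicities, and makes consecutive edges distinct; two distinct edges sharing a vertex share
exactly one. Since `G` has two distinct edges, the result does not collapse to a single edge.
-/

namespace List

variable {α : Type*} {R : α → α → Prop}

theorem head?_destutter' (S : α → α → Prop) [DecidableRel S] (a : α) (l : List α) :
    (l.destutter' S a).head? = some a := by
  induction l generalizing a with
  | nil => rfl
  | cons b l ih =>
    rw [destutter'_cons]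
    split_ifs
    · rfl
    · exact ih a

variable [DecidableEq α]

theorem getLast?_destutter'_ne (a : α) (l : List α) :
    (l.destutter' (· ≠ ·) a).getLast? = (a :: l).getLast? := by
  induction l generalizing a with
  | nil => rfl
  | cons b l ih =>
    by_cases hab : a = b
    · subst hab
      rw [destutter'_cons, if_neg (not_not.2 rfl), ih, getLast?_cons_cons]
    · rw [destutter'_cons, if_pos hab, getLast?_cons_cons, ← ih]
      simp [getLast?_cons, getLast?_eq_some_getLast (destutter'_ne_nil _ _)]

theorem mem_destutter'_ne {a x : α} {l : List α} (hx : x ∈ a :: l) :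
    x ∈ l.destutter' (· ≠ ·) a := by
  induction l generalizing a with
  | nil => simpa using hx
  | cons b l ih =>
    by_cases hab : a = b
    · subst hab
      rw [destutter'_cons, if_neg (not_not.2 rfl)]
      exact ih (by simpa using hx)
    · rw [destutter'_cons, if_pos hab]
      rcases mem_cons.1 hx with rfl | hx
      · exact mem_cons_self
      · exact mem_cons_of_mem _ (ih hx)

theorem IsChain.destutter'_ne {a : α} {l : List α} (h : (a :: l).IsChain R) :
    (l.destutter' (· ≠ ·) a).IsChain (fun x y => R x y ∧ x ≠ y) := by
  induction l generalizing a with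
  | nil => exact isChain_singleton a
  | cons b l ih =>
    rw [isChain_cons_cons] at h
    by_cases hab : a = b
    · subst hab
      rw [destutter'_cons, if_neg (not_not.2 rfl)]
      exact ih h.2
    · rw [destutter'_cons, if_pos hab, List.isChain_cons, head?_destutter']
      exact ⟨fun c hc => Option.some_inj.1 hc ▸ ⟨h.1, hab⟩, ih h.2⟩

/-- Appending the head lets `destutter` compare the last entry with the first; the copy of the
head always survives as the last entry of the result and is dropped again. -/
def cyclicDestutter (l : List α) : List α :=
  (destutter (· ≠ ·) (l ++ l.take 1)).dropLast

theorem cyclicDestutter_cons_append_singleton (a : α) (l : List α) :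
    (a :: l).cyclicDestutter ++ [a] = (l ++ [a]).destutter' (· ≠ ·) a := by
  have hlast := getLast?_destutter'_ne a (l ++ [a])
  rw [← cons_append, getLast?_append_of_ne_nil _ (cons_ne_nil a []),
    getLast?_singleton, getLast?_eq_some_getLast (destutter'_ne_nil _ _), Option.some_inj] at hlast
  rw [cyclicDestutter, cons_append, take_succ_cons, take_zero, destutter_cons']
  conv_rhs => rw [← dropLast_append_getLast (destutter'_ne_nil _ _), hlast]

theorem cyclicDestutter_sublist (l : List α) : l.cyclicDestutter <+ l := by
  cases l with
  | nil => exact Sublist.slnil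
  | cons a l =>
    rw [← append_sublist_append_right [a], cyclicDestutter_cons_append_singleton]
    exact destutter'_sublist _ _ a

theorem cyclicDestutter_cons_eq_nil_or_eq_cons (a : α) (l : List α) :
    (a :: l).cyclicDestutter = [] ∨ ∃ t, (a :: l).cyclicDestutter = a :: t := by
  have hhead := head?_destutter' (· ≠ ·) a (l ++ [a])
  rw [← cyclicDestutter_cons_append_singleton] at hhead
  rcases h : (a :: l).cyclicDestutter with _ | ⟨c, t⟩
  · exact .inl rfl
  · rw [h] at hhead
    obtain rfl : c = a := by simpa using hhead
    exact .inr ⟨t, rfl⟩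

theorem subset_cyclicDestutter {l : List α} {x y : α} (hx : x ∈ l) (hy : y ∈ l)
    (hxy : x ≠ y) : l ⊆ l.cyclicDestutter := by
  obtain ⟨a, l, rfl⟩ := exists_cons_of_ne_nil (ne_nil_of_mem hx)
  have hmem : ∀ z ∈ a :: l, z ∈ (a :: l).cyclicDestutter ++ [a] := fun z hz => by
    rw [cyclicDestutter_cons_append_singleton]
    exact mem_destutter'_ne ((sublist_append_left (a :: l) [a]).subset hz)
  rcases cyclicDestutter_cons_eq_nil_or_eq_cons a l with hnil | ⟨t, ht⟩
  · rw [hnil] at hmem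
    exact absurd ((mem_singleton.1 (hmem x hx)).trans (mem_singleton.1 (hmem y hy)).symm) hxy
  · rw [ht] at hmem ⊢
    intro z hz
    rcases mem_append.1 (hmem z hz) with hz | hz
    · exact hz
    · exact mem_singleton.1 hz ▸ mem_cons_self

theorem IsChain.cyclicDestutter {l : List α} (h : (l ++ l.take 1).IsChain R) :
    (l.cyclicDestutter ++ l.cyclicDestutter.take 1).IsChain (fun x y => R x y ∧ x ≠ y) := by
  cases l with
  | nil => exact isChain_nil
  | cons a l =>
    have hchain : (l ++ [a]).destutter' (· ≠ ·) a |>.IsChain (fun x y => R x y ∧ x ≠ y) :=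
      IsChain.destutter'_ne (by simpa using h)
    rw [← cyclicDestutter_cons_append_singleton] at hchain
    rcases cyclicDestutter_cons_eq_nil_or_eq_cons a l with hnil | ⟨t, ht⟩
    · rw [hnil]
      exact isChain_nil
    · rw [ht] at hchain ⊢
      simpa using hchain

end List

theorem List.Vector.rel_get_add_one {α : Type*} {R : α → α → Prop} {n : ℕ}
    (v : Vector α (n + 1)) (h : (v.toList ++ v.toList.take 1).IsChain R) (i : Fin (n + 1)) :
    R (v.get i) (v.get (i + 1)) := by
  have hlen := v.toList_length
  rw [List.isChain_iff_getElem] at h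
  simp only [List.Vector.get_eq_get_toList, List.get_eq_getElem, Fin.val_cast, Fin.val_add_one]
  split_ifs with hi
  · subst hi
    simpa [List.getElem_append_right, hlen] using h n (by simp [hlen])
  · have hin : (i : ℕ) < n := Fin.val_lt_last hi
    have := h i (by simp [hlen]; omega)
    rwa [List.getElem_append_left (by omega), List.getElem_append_left (by omega)] at this

theorem Sym2.existsUnique_mem_and_mem_of_ne {α : Type*} {e f : Sym2 α} (hef : e ≠ f) {v : α}
    (he : v ∈ e) (hf : v ∈ f) : ∃! w, w ∈ e ∧ w ∈ f :=
  ⟨v, ⟨he, hf⟩, fun _ hw =>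
    by_contra fun hwv => hef (Sym2.eq_of_ne_mem hwv hw.1 he hw.2 hf)⟩

namespace SimpleGraph.Walk

variable {V : Type*} {G : SimpleGraph V}

theorem isChain_edges_append_take_one {u : V} (p : G.Walk u u) :
    (p.edges ++ p.edges.take 1).IsChain (fun e f => ∃ v, v ∈ e ∧ v ∈ f) := by
  have hprefix : p.edges ++ p.edges.take 1 <+: (p.append p).edges := by
    rw [edges_append]
    exact (List.prefix_append_right_inj _).2 (List.take_prefix 1 _)
  refine List.IsChain.prefix ?_ hprefix
  rw [edges, List.isChain_map]
  exact (p.append p).isChain_dartAdj_darts.imp fun d d' (h : d.snd = d'.fst) =>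
    ⟨d.snd, Sym2.mem_mk_right _ _, h ▸ Sym2.mem_mk_left _ _⟩

theorem exists_mem_support_adj_notMem_edges_of_not_subset {u w x y : V} (p : G.Walk u w)
    (q : G.Walk x y) (hx : x ∈ p.support) (hq : ¬q.edges ⊆ p.edges) :
    ∃ a ∈ p.support, ∃ b, G.Adj a b ∧ s(a, b) ∉ p.edges := by
  induction q with
  | nil => exact absurd (List.nil_subset _) hq
  | @cons x v y hxv q ih =>
    by_cases hxv' : s(x, v) ∈ p.edges
    · exact ih (p.snd_mem_support_of_mem_edges hxv') fun h => hq (List.cons_subset.2 ⟨hxv', h⟩)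
    · exact ⟨x, hx, v, hxv, hxv'⟩

theorem exists_mem_support_adj_notMem_edges_of_connected {u w : V} (hG : G.Connected)
    (p : G.Walk u w) {e : Sym2 V} (he : e ∈ G.edgeSet) (hp : e ∉ p.edges) :
    ∃ a ∈ p.support, ∃ b, G.Adj a b ∧ s(a, b) ∉ p.edges := by
  induction e using Sym2.ind with
  | _ a b =>
  obtain ⟨r⟩ := hG.preconnected u a
  refine p.exists_mem_support_adj_notMem_edges_of_not_subset (r.concat (G.mem_edgeSet.1 he))
    p.start_mem_support ?_
  rw [edges_concat]
  exact fun h => hp (h (by simp))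

variable [DecidableEq V]

theorem exists_edges_perm_cons_cons {u w x y : V} (p : G.Walk u w) (hx : x ∈ p.support)
    (h : G.Adj x y) : ∃ q : G.Walk u w, q.edges.Perm (s(x, y) :: s(x, y) :: p.edges) := by
  refine ⟨(p.takeUntil x hx).append (cons h (cons h.symm (p.dropUntil x hx))), ?_⟩
  conv_rhs => rw [← p.take_spec hx]
  simp only [edges_append, edges_cons, Sym2.eq_swap (a := y)]
  exact List.perm_middle.trans (List.Perm.cons _ List.perm_middle)

theorem exists_covering_edges_count_le_two [Finite V] (hG : G.Connected) {u w : V}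
    (p : G.Walk u w) (hp : ∀ e, p.edges.count e ≤ 2) :
    ∃ q : G.Walk u w, (∀ e ∈ G.edgeSet, e ∈ q.edges) ∧ ∀ e, q.edges.count e ≤ 2 := by
  by_cases hcov : ∀ e ∈ G.edgeSet, e ∈ p.edges
  · exact ⟨p, hcov, hp⟩
  push Not at hcov
  obtain ⟨e, he, hpe⟩ := hcov
  obtain ⟨x, hx, y, hxy, hnew⟩ := p.exists_mem_support_adj_notMem_edges_of_connected hG he hpe
  obtain ⟨q, hq⟩ := p.exists_edges_perm_cons_cons hx hxy
  have hcount : ∀ f, q.edges.count f ≤ 2 := fun f => by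
    rw [hq.count_eq, List.count_cons, List.count_cons]
    by_cases hf : s(x, y) = f
    · subst hf
      simp [List.count_eq_zero_of_not_mem hnew]
    · simp [hf, hp f]
  have hsub :
      {f | f ∈ G.edgeSet ∧ f ∉ q.edges} ⊂ {f | f ∈ G.edgeSet ∧ f ∉ p.edges} := by
    have hpq : ∀ f ∈ p.edges, f ∈ q.edges := fun f hf =>
      hq.symm.subset (List.mem_cons_of_mem _ (List.mem_cons_of_mem _ hf))
    refine (Set.ssubset_iff_of_subset ?_).2
      ⟨s(x, y), ⟨hxy, hnew⟩, fun h => h.2 (hq.symm.subset List.mem_cons_self)⟩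
    exact fun f hf => ⟨hf.1, fun h => hf.2 (hpq f h)⟩
  exact q.exists_covering_edges_count_le_two hG hcount
termination_by {f | f ∈ G.edgeSet ∧ f ∉ p.edges}.ncard
decreasing_by exact Set.ncard_lt_ncard hsub (Set.toFinite _)

end SimpleGraph.Walk

/-- Every finite connected simple graph with at least two edges admits a cyclic sequence
`e_0, …, e_k` of edges such that every edge of `G` appears in the sequence, consecutive
edges (cyclically) are distinct and share exactly one vertex, and no edge appears more
than twice. -/
theorem stmt_6 {V : Type*} [Fintype V] [DecidableEq V] (G : SimpleGraph V)
    [DecidableRel G.Adj] (hconn : G.Connected) (hm : 2 ≤ G.edgeFinset.card) :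
    ∃ (k : ℕ) (e : Fin (k + 1) → Sym2 V),
      (∀ i, e i ∈ G.edgeSet) ∧
      (∀ f ∈ G.edgeSet, ∃ i, e i = f) ∧
      (∀ i : Fin (k + 1), e i ≠ e (i + 1) ∧ ∃! v : V, v ∈ e i ∧ v ∈ e (i + 1)) ∧
      (∀ f : Sym2 V, (Finset.univ.filter (fun i : Fin (k + 1) => e i = f)).card ≤ 2) := by
  obtain ⟨u⟩ := hconn.nonempty
  obtain ⟨p, hcov, hcount⟩ :=
    (SimpleGraph.Walk.nil : G.Walk u u).exists_covering_edges_count_le_two hconn (by simp)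
  obtain ⟨a, ha, b, hb, hab⟩ := Finset.one_lt_card.1 hm
  rw [SimpleGraph.mem_edgeFinset] at ha hb
  have hsub : p.edges.cyclicDestutter.Sublist p.edges := List.cyclicDestutter_sublist _
  have hcov' : ∀ f ∈ G.edgeSet, f ∈ p.edges.cyclicDestutter := fun f hf =>
    List.subset_cyclicDestutter (hcov a ha) (hcov b hb) hab (hcov f hf)
  obtain ⟨k, hk⟩ := Nat.exists_eq_succ_of_ne_zero (List.length_pos_of_mem (hcov' a ha)).ne'
  let v : List.Vector (Sym2 V) (k + 1) := ⟨p.edges.cyclicDestutter, hk⟩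
  refine ⟨k, v.get, fun i => ?_, fun f hf => ?_, fun i => ?_, fun f => ?_⟩
  · exact p.edges_subset_edgeSet (hsub.subset (v.get_mem i))
  · exact (List.Vector.mem_iff_get f v).1 (hcov' f hf)
  · obtain ⟨⟨w, hw, hw'⟩, hne⟩ :=
      v.rel_get_add_one p.isChain_edges_append_take_one.cyclicDestutter i
    exact ⟨hne, Sym2.existsUnique_mem_and_mem_of_ne hne hw hw'⟩
  · rw [Fin.card_filter_univ_eq_vector_get_eq_count]
    exact (hsub.count_le f).trans (hcount f)
end

section
/- In a graph with edges labeled bijectively by distinct numbers, any cycle contributes at most one vertex v at which the cycle can be traversed (starting and ending at v) with strictly increasing edge labels; moreover, every triangle contributes exactly one such vertex. -/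
/-- The label of the `i`-th edge of the traversal of the cycle `c` started at `k`,
in direction `d` (`true` = forward, `false` = backward), under edge labeling `w`. -/
def travLabel {V : Type*} {r : ℕ} [NeZero r] (c : Fin r → V) (w : Sym2 V → ℤ)
    (d : Bool) (k i : Fin r) : ℤ :=
  if d then w s(c (k + i), c (k + i + 1)) else w s(c (k - i), c (k - i - 1))

/-- `IncTrav c w p` : the traversal of the cycle `c` starting at position `p.1`, in
direction `p.2`, has strictly increasing edge labels. -/
def IncTrav {V : Type*} {r : ℕ} [NeZero r] (c : Fin r → V) (w : Sym2 V → ℤ)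
    (p : Fin r × Bool) : Prop :=
  ∀ i j : Fin r, i < j → travLabel c w p.2 p.1 i < travLabel c w p.2 p.1 j

/-!
Number the edges of the cycle by `Fin r`, edge `i` joining `c i` and `c (i + 1)`. A traversal
from `k` in direction `d` visits the edges in the order of a permutation `travPerm k d` of
`Fin r` (a rotation or a reflection), and it is increasing iff the edge labels composed with that
permutation are strictly monotone. At most one permutation sorts a tuple strictly, and for
`r ≥ 3` the `2r` rotations and reflections are pairwise distinct; this gives uniqueness. For a
triangle they exhaust all `3! = 6` permutations of `Fin 3`, so the permutation sorting the
(distinct) labels is one of them.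
-/

open Equiv Function

section

variable {V : Type*} {r : ℕ} [NeZero r]

lemma Fin.two_ne_zero_of_three_le (hr : 3 ≤ r) : (2 : Fin r) ≠ 0 := by
  obtain ⟨n, rfl⟩ : ∃ n, r = n + 3 := ⟨r - 3, by omega⟩
  intro h
  simpa [Nat.mod_eq_of_lt (show 2 < n + 3 by omega)] using congrArg Fin.val h

lemma perm_eq_of_strictMono_comp {α : Type*} [PartialOrder α] {n : ℕ} {f : Fin n → α}
    {σ τ : Perm (Fin n)} (hσ : StrictMono (f ∘ σ)) (hτ : StrictMono (f ∘ τ)) : σ = τ := by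
  have hf : Injective f := by
    simpa [comp_assoc] using hσ.injective.comp σ.symm.injective
  exact Perm.ext fun i => hf (congrFun (Tuple.unique_monotone hσ.monotone hτ.monotone) i)

def edgeLabel (c : Fin r → V) (w : Sym2 V → ℤ) (i : Fin r) : ℤ := w s(c i, c (i + 1))

-- Step `i` from `k` runs along edge `k + i` forwards and edge `k - 1 - i` backwards.
def travPerm (k : Fin r) : Bool → Perm (Fin r)
  | true => Equiv.addLeft k
  | false => Equiv.subLeft (k - 1)

lemma travLabel_eq (c : Fin r → V) (w : Sym2 V → ℤ) (k : Fin r) (d : Bool) :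
    travLabel c w d k = edgeLabel c w ∘ travPerm k d := by
  funext i
  cases d
  · simp [travLabel, edgeLabel, travPerm, sub_right_comm, Sym2.eq_swap]
  · rfl

lemma incTrav_iff (c : Fin r → V) (w : Sym2 V → ℤ) (k : Fin r) (d : Bool) :
    IncTrav c w (k, d) ↔ StrictMono (edgeLabel c w ∘ travPerm k d) := by
  rw [← travLabel_eq]; rfl

open Fin.CommRing in
lemma travPerm_injective (hr : 3 ≤ r) :
    Injective fun p : Fin r × Bool => travPerm p.1 p.2 := by
  rintro ⟨k, d⟩ ⟨k', d'⟩ h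
  have h0 := DFunLike.congr_fun h 0
  have h1 := DFunLike.congr_fun h 1
  cases d <;> cases d' <;> simp only [travPerm, coe_addLeft, subLeft_apply, add_zero,
    Prod.mk.injEq, and_true, reduceCtorEq, and_false] at h0 h1 ⊢
  · linear_combination h0
  · exact Fin.two_ne_zero_of_three_le hr (by linear_combination h0 - h1)
  · exact Fin.two_ne_zero_of_three_le hr (by linear_combination h1 - h0)
  · exact h0

open Fin.CommRing in
lemma edgeLabel_injective (G : SimpleGraph V) (w : Sym2 V → ℤ) (hw : Set.InjOn w G.edgeSet)
    (hr : 3 ≤ r) (c : Fin r → V) (hc : Injective c) (hadj : ∀ i, G.Adj (c i) (c (i + 1))) :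
    Injective (edgeLabel c w) := by
  intro i j h
  rcases Sym2.eq_iff.1 (hw (hadj i) (hadj j) h) with ⟨hij, -⟩ | ⟨hij, hji⟩
  · exact hc hij
  · exact absurd (by linear_combination hc hji - hc hij) (Fin.two_ne_zero_of_three_le hr)

lemma incTrav_subsingleton (hr : 3 ≤ r) (c : Fin r → V) (w : Sym2 V → ℤ) :
    {p : Fin r × Bool | IncTrav c w p}.Subsingleton := by
  rintro ⟨k, d⟩ hp ⟨k', d'⟩ hq
  rw [Set.mem_ofPred_eq, incTrav_iff] at hp hq
  exact travPerm_injective hr (perm_eq_of_strictMono_comp hp hq)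

lemma travPerm_surjective_three : Surjective fun p : Fin 3 × Bool => travPerm p.1 p.2 :=
  ((Fintype.bijective_iff_injective_and_card _).2
    ⟨travPerm_injective le_rfl, by simp [Fintype.card_perm, Nat.factorial]⟩).2

lemma exists_incTrav_three (c : Fin 3 → V) (w : Sym2 V → ℤ) (hinj : Injective (edgeLabel c w)) :
    ∃ p, IncTrav c w p := by
  obtain ⟨⟨k, d⟩, hsort : travPerm k d = _⟩ :=
    travPerm_surjective_three (Tuple.sort (edgeLabel c w))
  refine ⟨(k, d), (incTrav_iff c w k d).2 ?_⟩
  rw [hsort]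
  exact (Tuple.monotone_sort _).strictMono_of_injective (hinj.comp (Equiv.injective _))

end

/-- For a cycle in a graph with injectively labeled edges, at most one choice of starting
vertex and direction yields a traversal with strictly increasing edge labels; and for a
triangle, exactly one such choice exists. -/
theorem stmt_8 {V : Type*} (G : SimpleGraph V) (w : Sym2 V → ℤ)
    (hw : Set.InjOn w G.edgeSet) (r : ℕ) [NeZero r] (hr : 3 ≤ r) (c : Fin r → V)
    (hcinj : Function.Injective c) (hadj : ∀ i : Fin r, G.Adj (c i) (c (i + 1))) :
    {p : Fin r × Bool | IncTrav c w p}.Subsingleton ∧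
    (r = 3 → ∃! p : Fin r × Bool, IncTrav c w p) := by
  refine ⟨incTrav_subsingleton hr c w, ?_⟩
  rintro rfl
  obtain ⟨p, hp⟩ := exists_incTrav_three c w (edgeLabel_injective G w hw hr c hcinj hadj)
  exact ⟨p, hp, fun q hq => incTrav_subsingleton hr c w hq hp⟩
end

section
/- On the star graph K_{1,n} with n ≥ 4, there is a 3-fair periodic node schedule and an initial configuration (two leaves labeled 1, all other vertices 0) such that, under the Pavlov dynamics where the scheduler also controls the partner choices realized along this schedule, the system returns to the initial configuration after each period and hence never reaches the all-zeros configuration. -/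
open Fin.NatCast

/-- One step of the Pavlov dynamics along the edge `(u,v)`. -/
def pav {V : Type*} [DecidableEq V] (X : V → ZMod 2) (u v : V) : V → ZMod 2 :=
  fun w => if w = u ∨ w = v then X u + X v else X w

/-- One period of the node schedule `[0, 1, 1, 3, 4, …, n-2, 2, 1, n-1, n-1]`
on the star `K_{1,n}` (center `0`, leaves `1, …, n`), of length `n + 3`. -/
def starSchedList (n : ℕ) : List (Fin (n + 1)) :=
  [0, ((1 : ℕ) : Fin (n + 1)), ((1 : ℕ) : Fin (n + 1))] ++
    (List.range (n - 4)).map (fun i => ((i + 3 : ℕ) : Fin (n + 1))) ++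
    [((2 : ℕ) : Fin (n + 1)), ((1 : ℕ) : Fin (n + 1)),
      ((n - 1 : ℕ) : Fin (n + 1)), ((n - 1 : ℕ) : Fin (n + 1))]

/-- The periodic extension of the above schedule. -/
def starSched (n : ℕ) (t : ℕ) : Fin (n + 1) :=
  (starSchedList n).getD (t % (n + 3)) 0

/-- The partner of the scheduled node: the center `0` plays leaf `1`; every scheduled
leaf plays the center (every edge of the star contains the center). -/
def starPartner (n : ℕ) (t : ℕ) : Fin (n + 1) :=
  if starSched n t = 0 then ((1 : ℕ) : Fin (n + 1)) else 0

/-!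
Within one period the schedule is explicit, and so is the trajectory. Playing a leaf against
the centre changes nothing when both carry `0`, spreads a single `1` to both, and clears two
`1`s, so the support of the configuration runs through
`{1,2} → {0,1,2} → {2} → ⋯ → {2} → {0,2} → {0,1,2} → {0,1,2,n-1} → {1,2}`.
Leaf `2` carries a `1` throughout, so the all-zero configuration is never reached.

For fairness: between consecutive schedulings of `x` lies less than one period, and within a
period leaf `1` is scheduled three times, leaf `n-1` twice and every other node at most once.
-/

open Finset Function

section Pavlov

variable {V : Type*} [DecidableEq V]

def onesOn (S : Finset V) : V → ZMod 2 := fun w => if w ∈ S then 1 else 0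

lemma pav_comp_of_injective {W : Type*} [DecidableEq W] {g : V → W} (hg : Injective g)
    (X : W → ZMod 2) (u v : V) : pav (X ∘ g) u v = pav X (g u) (g v) ∘ g := by
  funext w
  simp only [pav, comp_apply, hg.eq_iff]

variable {S : Finset V} {u v : V}

lemma pav_onesOn_of_notMem_of_notMem (hu : u ∉ S) (hv : v ∉ S) :
    pav (onesOn S) u v = onesOn S := by
  funext w
  by_cases hw : w = u ∨ w = v
  · rcases hw with rfl | rfl <;> simp_all [pav, onesOn]
  · simp_all [pav, onesOn]

lemma pav_onesOn_of_mem_of_notMem (hu : u ∈ S) (hv : v ∉ S) :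
    pav (onesOn S) u v = onesOn (insert v S) := by
  funext w
  by_cases hw : w = u ∨ w = v
  · rcases hw with rfl | rfl <;> simp_all [pav, onesOn]
  · simp_all [pav, onesOn]

lemma pav_onesOn_of_notMem_of_mem (hu : u ∉ S) (hv : v ∈ S) :
    pav (onesOn S) u v = onesOn (insert u S) := by
  funext w
  by_cases hw : w = u ∨ w = v
  · rcases hw with rfl | rfl <;> simp_all [pav, onesOn]
  · simp_all [pav, onesOn]

lemma pav_onesOn_of_mem_of_mem (hu : u ∈ S) (hv : v ∈ S) :
    pav (onesOn S) u v = onesOn (S \ {u, v}) := by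
  funext w
  by_cases hw : w = u ∨ w = v
  · rcases hw with rfl | rfl <;> simp_all [pav, onesOn] <;> decide
  · simp_all [pav, onesOn]

end Pavlov

theorem Function.Periodic.card_filter_Ioo_le_count {α : Type*} [DecidableEq α] {f : ℕ → α}
    {p : ℕ} (hf : Periodic f p) (hp : 0 < p) {a b : ℕ}
    (hgap : ∀ t, a < t → t < b → f t ≠ f a) (y : α) :
    #{t ∈ Ioo a b | f t = y} ≤ Nat.count (fun t => f t = y) p := by
  have hb : b ≤ a + p := by
    by_contra! h
    exact hgap (a + p) (by omega) h (hf a)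
  calc #{t ∈ Ioo a b | f t = y} ≤ #{t ∈ Ico (a + 1) (a + 1 + p) | f t = y} :=
        card_le_card <| filter_subset_filter _ fun t ht => by
          simp only [mem_Ioo, mem_Ico] at ht ⊢
          omega
    _ = Nat.count (fun t => f t = y) p :=
        Nat.filter_Ico_card_eq_of_periodic _ _ _ (hf.comp (· = y))

def starSchedNat (n r : ℕ) : ℕ :=
  if r = 0 then 0 else if r ≤ 2 then 1 else if r ≤ n - 2 then r
  else if r = n - 1 then 2 else if r = n then 1 else n - 1

lemma starSchedList_getD {n r : ℕ} (hn : 4 ≤ n) (hr : r < n + 3) :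
    (starSchedList n).getD r 0 = (starSchedNat n r : Fin (n + 1)) := by
  have hlen : ([0, ((1 : ℕ) : Fin (n + 1)), ((1 : ℕ) : Fin (n + 1))] ++
      (List.range (n - 4)).map (fun i => ((i + 3 : ℕ) : Fin (n + 1)))).length = n - 1 := by
    simp only [List.length_append, List.length_cons, List.length_nil, List.length_map,
      List.length_range]
    omega
  unfold starSchedList
  obtain hr3 | ⟨hr3, hrn⟩ | hrn : r < 3 ∨ 3 ≤ r ∧ r < n - 1 ∨ n - 1 ≤ r := by omega
  · rw [List.getD_append _ _ _ _ (by omega), List.getD_append _ _ _ _ (by simpa)]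
    interval_cases r <;> rfl
  · rw [List.getD_append _ _ _ _ (by omega), List.getD_append_right _ _ _ _ (by simpa),
      List.getD_eq_getElem _ _ (by
      simp only [List.length_map, List.length_range, List.length_cons, List.length_nil]
      omega)]
    simp only [List.getElem_map, List.getElem_range, List.length_cons, List.length_nil]
    rw [show starSchedNat n r = r by unfold starSchedNat; split_ifs <;> omega]
    congr 2
    omega
  · obtain ⟨k, hk, rfl⟩ : ∃ k < 4, r = n - 1 + k := ⟨r - (n - 1), by omega, by omega⟩
    rw [List.getD_append_right _ _ _ _ (by omega), hlen, Nat.add_sub_cancel_left]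
    interval_cases k
    all_goals
      unfold starSchedNat
      split_ifs <;> first | omega | rfl | contradiction

lemma starSchedNat_le {n : ℕ} (hn : 4 ≤ n) (r : ℕ) : starSchedNat n r ≤ n := by
  unfold starSchedNat
  split_ifs <;> omega

lemma val_starSched {n : ℕ} (hn : 4 ≤ n) (t : ℕ) :
    (starSched n t : ℕ) = starSchedNat n (t % (n + 3)) := by
  rw [starSched, starSchedList_getD hn (Nat.mod_lt _ (by omega)),
    Fin.val_cast_of_lt (Nat.lt_succ_of_le (starSchedNat_le hn _))]

lemma val_starPartner {n : ℕ} (hn : 4 ≤ n) (t : ℕ) :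
    (starPartner n t : ℕ) = if starSchedNat n (t % (n + 3)) = 0 then 1 else 0 := by
  have h0 : starSched n t = 0 ↔ starSchedNat n (t % (n + 3)) = 0 := by
    rw [Fin.ext_iff, val_starSched hn, Fin.val_zero]
  simp only [starPartner, h0]
  split_ifs
  · exact Fin.val_cast_of_lt (by omega)
  · rfl

lemma starSched_periodic (n : ℕ) : Periodic (starSched n) (n + 3) := fun t => by
  simp only [starSched, Nat.add_mod_right]

lemma starSched_ne_starPartner {n : ℕ} (hn : 4 ≤ n) (t : ℕ) :
    starSched n t ≠ starPartner n t := by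
  rw [Ne, Fin.ext_iff, val_starSched hn, val_starPartner hn]
  split_ifs <;> omega

lemma card_filter_starSchedNat_le {n : ℕ} (hn : 4 ≤ n) (v : ℕ) :
    #{r ∈ range (n + 3) | starSchedNat n r = v} ≤ 3 := by
  by_cases h1 : v = 1
  · calc #{r ∈ range (n + 3) | starSchedNat n r = v}
          ≤ #{1, 2, n} := card_le_card fun r hr => by
          rw [mem_filter, mem_range, starSchedNat] at hr
          simp only [mem_insert, mem_singleton]
          split_ifs at hr <;> omega
      _ ≤ 3 := card_le_three
  by_cases hn1 : v = n - 1
  · calc #{r ∈ range (n + 3) | starSchedNat n r = v}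
          ≤ #{n + 1, n + 2} := card_le_card fun r hr => by
          rw [mem_filter, mem_range, starSchedNat] at hr
          simp only [mem_insert, mem_singleton]
          split_ifs at hr <;> omega
      _ ≤ 3 := card_le_two.trans (by norm_num)
  refine (card_le_one.2 fun r hr s hs => ?_).trans (by norm_num)
  rw [mem_filter, mem_range, starSchedNat] at hr hs
  split_ifs at hr hs <;> omega

lemma count_starSched_le {n : ℕ} (hn : 4 ≤ n) (y : Fin (n + 1)) :
    Nat.count (fun t => starSched n t = y) (n + 3) ≤ 3 := by
  rw [Nat.count_eq_card_filter_range]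
  calc #{t ∈ range (n + 3) | starSched n t = y}
      = #{r ∈ range (n + 3) | starSchedNat n r = y} := by
        refine congrArg card (filter_congr fun r hr => ?_)
        rw [Fin.ext_iff, val_starSched hn, Nat.mod_eq_of_lt (mem_range.1 hr)]
    _ ≤ 3 := card_filter_starSchedNat_le hn y

def starSupport (n r : ℕ) : Finset ℕ :=
  if r = 0 then {1, 2} else if r = 1 then {0, 1, 2} else if r < n then {2}
  else if r = n then {0, 2} else if r = n + 1 then {0, 1, 2} else {0, 1, 2, n - 1}

lemma two_mem_starSupport (n r : ℕ) : 2 ∈ starSupport n r := by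
  unfold starSupport
  split_ifs <;> simp

lemma pav_onesOn_starSupport {n r : ℕ} (hn : 4 ≤ n) (hr : r < n + 3) :
    pav (onesOn (starSupport n r)) (starSchedNat n r) (if starSchedNat n r = 0 then 1 else 0) =
      onesOn (starSupport n ((r + 1) % (n + 3))) := by
  obtain rfl | rfl | ⟨hr2, hrn⟩ | rfl | hr | hr | hr : r = 0 ∨ r = 1 ∨
      (2 ≤ r ∧ r ≤ n - 2) ∨ r = n - 1 ∨ r = n ∨ r = n + 1 ∨ r = n + 2 := by omega
  all_goals try rw [hr]
  all_goals simp (disch := omega) only [starSchedNat, starSupport, if_pos, if_neg, if_true,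
    Nat.mod_eq_of_lt, show n + 2 + 1 = n + 3 from rfl, Nat.mod_self]
  · exact pav_onesOn_of_notMem_of_mem (by decide) (by decide)
  · rw [pav_onesOn_of_mem_of_mem (by decide) (by decide)]
    congr 1
  · split_ifs <;> first | omega |
      exact pav_onesOn_of_notMem_of_notMem (by rw [mem_singleton]; omega) (by decide)
  · exact pav_onesOn_of_mem_of_notMem (by decide) (by decide)
  · rw [pav_onesOn_of_notMem_of_mem (by decide) (by decide)]
    congr 1
    decide
  · rw [pav_onesOn_of_notMem_of_mem (by simp only [mem_insert, mem_singleton]; omega) (by decide)]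
    congr 1
    ext
    simp only [mem_insert, mem_singleton]
    omega
  · rw [pav_onesOn_of_mem_of_mem (by simp) (by simp)]
    congr 1
    ext
    simp only [mem_sdiff, mem_insert, mem_singleton]
    omega

def starTraj (n t : ℕ) : Fin (n + 1) → ZMod 2 :=
  onesOn (starSupport n (t % (n + 3))) ∘ Fin.val

lemma starTraj_succ {n : ℕ} (hn : 4 ≤ n) (t : ℕ) :
    starTraj n (t + 1) = pav (starTraj n t) (starSched n t) (starPartner n t) := by
  rw [starTraj, starTraj, pav_comp_of_injective Fin.val_injective, val_starSched hn,
    val_starPartner hn, pav_onesOn_starSupport hn (Nat.mod_lt _ (by omega)), Nat.mod_add_mod]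

/-- On the star `K_{1,n}` (`n ≥ 4`), the periodic node schedule
`[0, 1, 1, 3, 4, …, n-2, 2, 1, n-1, n-1]` is `3`-fair, and — with the partner choices
it realizes — the Pavlov dynamics started from the configuration with `1`s exactly at
leaves `1` and `2` returns to this configuration after every period, hence never reaches
the all-zeros configuration. -/
theorem stmt_18 (n : ℕ) (hn : 4 ≤ n) :
    let init : Fin (n + 1) → ZMod 2 :=
      fun v => if v = ((1 : ℕ) : Fin (n + 1)) ∨ v = ((2 : ℕ) : Fin (n + 1)) then 1 else 0
    -- periodicity of the schedule
    (∀ t : ℕ, starSched n (t + (n + 3)) = starSched n t) ∧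
    -- every step plays an edge of the star: scheduled node ≠ partner, one of them is 0
    (∀ t : ℕ, starSched n t ≠ starPartner n t ∧
      (starSched n t = 0 ∨ starPartner n t = 0)) ∧
    -- 3-fairness: between two consecutive schedulings of any node `x`,
    -- no other node `y` is scheduled more than 3 times
    (∀ x y : Fin (n + 1), x ≠ y → ∀ a b : ℕ, a < b →
      starSched n a = x → starSched n b = x →
      (∀ t : ℕ, a < t → t < b → starSched n t ≠ x) →
      ((Finset.Ioo a b).filter (fun t => starSched n t = y)).card ≤ 3) ∧
    -- the trajectory returns to `init` after each period and never reaches all-zeros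
    (∃ T : ℕ → Fin (n + 1) → ZMod 2,
      T 0 = init ∧
      (∀ t : ℕ, T (t + 1) = pav (T t) (starSched n t) (starPartner n t)) ∧
      (∀ k : ℕ, T (k * (n + 3)) = init) ∧
      (∀ t : ℕ, T t ≠ 0)) := by
  intro init
  have h_init : starTraj n 0 = init := by
    funext v
    simp only [starTraj, starSupport, comp_apply, onesOn, mem_insert, mem_singleton, init,
      Fin.ext_iff, Fin.val_cast_of_lt (show 1 < n + 1 by omega),
      Fin.val_cast_of_lt (show 2 < n + 1 by omega), Nat.zero_mod, if_true]
  refine ⟨starSched_periodic n, fun t => ⟨starSched_ne_starPartner hn t, ?_⟩, ?_,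
    starTraj n, h_init, starTraj_succ hn, fun k => ?_, fun t hT => ?_⟩
  · unfold starPartner
    split_ifs with h
    exacts [Or.inl h, Or.inr rfl]
  · rintro x y - a b - rfl - hgap
    exact ((starSched_periodic n).card_filter_Ioo_le_count (by omega) hgap y).trans
      (count_starSched_le hn y)
  · rw [← h_init, starTraj, starTraj, Nat.mul_mod_left, Nat.zero_mod]
  · have h2 := congrFun hT ⟨2, by omega⟩
    simp [starTraj, onesOn, two_mem_starSupport] at h2
end
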